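/- Let π = μ_W ∘ (μ_S|S̃(E))⁻¹ : S(E) → W(E). Then (π ⊗ id_{∧E*}) ∘ δ_S = δ_W ∘ (π ⊗ id_{∧E*}) as maps S(E) ⊗ ∧E* → W(E) ⊗ ∧E*, where δ_S and δ_W are the maps induced by the Koszul differential δ of T(E) ⊗ ∧E* on S(E) ⊗ ∧E* and on W(E) ⊗ ∧E* respectively. -/

import Mathlib

/-!
Context: `A` a commutative ring, `lam ∈ A`, `E` a finite free `A`-module with basis
`e`, `ω` an alternating bilinear form, `u x = ω x : E → E*`.  `W(E)`, `S(E)` are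
`RingQuot`s of `T(E)` with projections `μ_W`, `μ_S`; `S̃(E)` is the span of the
nonincreasing tensor monomials `e_I` and `π = μ_W ∘ (μ_S|S̃(E))⁻¹`.  The Koszul
differential `δ` on `T(E) ⊗ ∧E*` (hypothesis `hδ`) induces `δ_S` on `S(E) ⊗ ∧E*` and
`δ_W` on `W(E) ⊗ ∧E*` (hypotheses `hδS`, `hδW`).
-/

open scoped TensorProduct

/-- The defining relation of the Weyl algebra `W(E)`. -/
def weylRel (A : Type*) [CommRing A] {E : Type*} [AddCommGroup E] [Module A E]
    (lam : A) (ω : E →ₗ[A] E →ₗ[A] A) :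
    TensorAlgebra A E → TensorAlgebra A E → Prop := fun a b =>
  ∃ x y : E, a = TensorAlgebra.ι A x * TensorAlgebra.ι A y ∧
    b = TensorAlgebra.ι A y * TensorAlgebra.ι A x +
      algebraMap A (TensorAlgebra A E) (lam * ω x y)

/-- The defining relation of the symmetric algebra `S(E)`. -/
def symRel (A : Type*) [CommRing A] (E : Type*) [AddCommGroup E] [Module A E] :
    TensorAlgebra A E → TensorAlgebra A E → Prop := fun a b =>
  ∃ x y : E, a = TensorAlgebra.ι A x * TensorAlgebra.ι A y ∧
    b = TensorAlgebra.ι A y * TensorAlgebra.ι A x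

/-- `e_I = e_{i₁} ⊗ ⋯ ⊗ e_{i_p} ∈ T(E)` for a list of indices `I` (with `e_∅ = 1`). -/
noncomputable def eTensor {A : Type*} [CommRing A] {E : Type*} [AddCommGroup E]
    [Module A E] {n : ℕ} (e : Module.Basis (Fin n) A E) (I : List (Fin n)) : TensorAlgebra A E :=
  (I.map fun i => TensorAlgebra.ι A (e i)).prod

/-- `S̃(E)`: the `A`-submodule of `T(E)` spanned by the tensors `e_I` over all
nonincreasing sequences `I`. -/
noncomputable def stilde {A : Type*} [CommRing A] {E : Type*} [AddCommGroup E]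
    [Module A E] {n : ℕ} (e : Module.Basis (Fin n) A E) : Submodule A (TensorAlgebra A E) :=
  Submodule.span A {t | ∃ I : List (Fin n), List.Pairwise (· ≥ ·) I ∧ t = eTensor e I}

/-!
On `S̃(E)` we have `π ∘ μ_S = μ_W`, and `δ` maps `S̃(E) ⊗ ∧E*` into itself, because deleting
one entry of a nonincreasing sequence leaves it nonincreasing. Hence on `μ_S t ⊗ η` with
`t ∈ S̃(E)`, and such elements span `S(E) ⊗ ∧E*`, both sides equal `(μ_W ⊗ id) (δ (t ⊗ η))`.
-/

open TensorProduct

section Intertwining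

variable {R T P Q N : Type*} [CommRing R] [AddCommGroup T] [Module R T]
  [AddCommGroup P] [Module R P] [AddCommGroup Q] [Module R Q] [AddCommGroup N] [Module R N]

theorem LinearMap.comp_ofBijective_symm_comp_subtype (M : Submodule R T) (p : T →ₗ[R] P)
    (q : T →ₗ[R] Q) (hp : Function.Bijective (p ∘ₗ M.subtype)) :
    ((q ∘ₗ M.subtype) ∘ₗ (LinearEquiv.ofBijective (p ∘ₗ M.subtype) hp).symm.toLinearMap) ∘ₗ
        p ∘ₗ M.subtype = q ∘ₗ M.subtype := by
  ext x
  exact congrArg (fun y : M => q y) ((LinearEquiv.ofBijective _ hp).symm_apply_apply x)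

theorem TensorProduct.map_comp_eq_comp_map_of_descends (M : Submodule R T) {p : T →ₗ[R] P}
    {q : T →ₗ[R] Q} {π : P →ₗ[R] Q} (hπ : π ∘ₗ p ∘ₗ M.subtype = q ∘ₗ M.subtype)
    (hp : Function.Surjective (p ∘ₗ M.subtype)) {D : T ⊗[R] N →ₗ[R] T ⊗[R] N}
    (hD : ∀ t ∈ M, ∀ η : N, D (t ⊗ₜ η) ∈ LinearMap.range (map M.subtype LinearMap.id))
    {DP : P ⊗[R] N →ₗ[R] P ⊗[R] N} (hDP : DP ∘ₗ map p LinearMap.id = map p LinearMap.id ∘ₗ D)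
    {DQ : Q ⊗[R] N →ₗ[R] Q ⊗[R] N} (hDQ : DQ ∘ₗ map q LinearMap.id = map q LinearMap.id ∘ₗ D) :
    map π LinearMap.id ∘ₗ DP = DQ ∘ₗ map π LinearMap.id := by
  refine TensorProduct.ext' fun s η => ?_
  obtain ⟨t, rfl⟩ := hp s
  obtain ⟨z, hz⟩ := hD t t.2 η
  have hπq : map π LinearMap.id (map p LinearMap.id (map M.subtype LinearMap.id z)) =
      map q LinearMap.id (map M.subtype LinearMap.id z) := by
    simp only [map_map, hπ, LinearMap.comp_id]
  calc map π LinearMap.id (DP (map p LinearMap.id (t.1 ⊗ₜ η)))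
      = map π LinearMap.id (map p LinearMap.id (D (t.1 ⊗ₜ η))) := by
        rw [← LinearMap.comp_apply DP, hDP, LinearMap.comp_apply]
    _ = map q LinearMap.id (D (t.1 ⊗ₜ η)) := by rw [← hz, hπq]
    _ = DQ (map π LinearMap.id (p t ⊗ₜ η)) := by
        rw [← LinearMap.comp_apply (map q _), ← hDQ, LinearMap.comp_apply, map_tmul, map_tmul]
        exact congrArg (fun y => DQ (y ⊗ₜ η)) (LinearMap.congr_fun hπ t).symm

end Intertwining

section Stilde

variable {A E N : Type*} [CommRing A] [AddCommGroup E] [Module A E] [AddCommGroup N] [Module A N]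
  {n : ℕ} (e : Module.Basis (Fin n) A E)

theorem eTensor_eq_prod_map (I : List (Fin n)) :
    eTensor e I = ((I.map e).map (TensorAlgebra.ι A)).prod := by
  rw [eTensor, List.map_map]
  rfl

theorem eTensor_eraseIdx_mem_stilde {I : List (Fin n)} (hI : I.Pairwise (· ≥ ·)) (i : ℕ) :
    eTensor e (I.eraseIdx i) ∈ stilde e :=
  Submodule.subset_span ⟨_, hI.sublist (I.eraseIdx_sublist i), rfl⟩

theorem koszul_tmul_mem_range_stilde {g : E → N → N}
    {δ : TensorAlgebra A E ⊗[A] N →ₗ[A] TensorAlgebra A E ⊗[A] N}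
    (hδ : ∀ (xs : List E) (η : N), δ ((xs.map fun x => TensorAlgebra.ι A x).prod ⊗ₜ[A] η) =
      ∑ i : Fin xs.length,
        ((xs.eraseIdx (i : ℕ)).map fun x => TensorAlgebra.ι A x).prod ⊗ₜ[A] g (xs.get i) η)
    {t : TensorAlgebra A E} (ht : t ∈ stilde e) (η : N) :
    δ (t ⊗ₜ η) ∈ LinearMap.range (map (stilde e).subtype LinearMap.id) := by
  induction ht using Submodule.span_induction generalizing η with
  | mem t ht =>
    obtain ⟨I, hI, rfl⟩ := ht
    rw [eTensor_eq_prod_map, hδ]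
    refine Submodule.sum_mem _ fun i _ =>
      ⟨⟨_, eTensor_eraseIdx_mem_stilde e hI i⟩ ⊗ₜ g ((I.map e).get i) η, ?_⟩
    rw [map_tmul, LinearMap.id_apply, List.eraseIdx_map]
    exact congrArg (· ⊗ₜ[A] _) (eTensor_eq_prod_map e _)
  | zero => simp
  | add x y _ _ hx hy => simpa only [add_tmul, map_add] using Submodule.add_mem _ (hx η) (hy η)
  | smul a x _ hx => simpa only [← smul_tmul', map_smul] using Submodule.smul_mem _ a (hx η)

end Stilde

theorem stmt8_general (A : Type*) [CommRing A] (E : Type*) [AddCommGroup E] [Module A E]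
    (lam : A) (ω : E →ₗ[A] E →ₗ[A] A) (ν ν' : ℕ) (e : Module.Basis (Fin (ν + ν')) A E)
    (δ : TensorAlgebra A E ⊗[A] ExteriorAlgebra A (Module.Dual A E) →ₗ[A]
      TensorAlgebra A E ⊗[A] ExteriorAlgebra A (Module.Dual A E))
    (hδ : ∀ (xs : List E) (η : ExteriorAlgebra A (Module.Dual A E)),
      δ ((xs.map fun x => TensorAlgebra.ι A x).prod ⊗ₜ[A] η) =
        ∑ i : Fin xs.length,
          ((xs.eraseIdx (i : ℕ)).map fun x => TensorAlgebra.ι A x).prod ⊗ₜ[A]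
            (ExteriorAlgebra.ι A (ω (xs.get i)) * η))
    (δS : RingQuot (symRel A E) ⊗[A] ExteriorAlgebra A (Module.Dual A E) →ₗ[A]
      RingQuot (symRel A E) ⊗[A] ExteriorAlgebra A (Module.Dual A E))
    (hδS : δS.comp (TensorProduct.map (RingQuot.mkAlgHom A (symRel A E)).toLinearMap
        LinearMap.id) =
      (TensorProduct.map (RingQuot.mkAlgHom A (symRel A E)).toLinearMap
        LinearMap.id).comp δ)
    (δW : RingQuot (weylRel A lam ω) ⊗[A] ExteriorAlgebra A (Module.Dual A E) →ₗ[A]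
      RingQuot (weylRel A lam ω) ⊗[A] ExteriorAlgebra A (Module.Dual A E))
    (hδW : δW.comp (TensorProduct.map (RingQuot.mkAlgHom A (weylRel A lam ω)).toLinearMap
        LinearMap.id) =
      (TensorProduct.map (RingQuot.mkAlgHom A (weylRel A lam ω)).toLinearMap
        LinearMap.id).comp δ)
    (hS : Function.Bijective
      ((RingQuot.mkAlgHom A (symRel A E)).toLinearMap.comp (stilde e).subtype)) :
    (TensorProduct.map
        (((RingQuot.mkAlgHom A (weylRel A lam ω)).toLinearMap.comp
            (stilde e).subtype).comp
          (LinearEquiv.ofBijective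
            ((RingQuot.mkAlgHom A (symRel A E)).toLinearMap.comp (stilde e).subtype)
            hS).symm.toLinearMap)
        (LinearMap.id : ExteriorAlgebra A (Module.Dual A E) →ₗ[A]
          ExteriorAlgebra A (Module.Dual A E))).comp δS =
      δW.comp
        (TensorProduct.map
          (((RingQuot.mkAlgHom A (weylRel A lam ω)).toLinearMap.comp
              (stilde e).subtype).comp
            (LinearEquiv.ofBijective
              ((RingQuot.mkAlgHom A (symRel A E)).toLinearMap.comp (stilde e).subtype)
              hS).symm.toLinearMap)
          LinearMap.id) := by
  have hδ_stilde : ∀ t ∈ stilde e, ∀ η, δ (t ⊗ₜ η) ∈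
      LinearMap.range (map (stilde e).subtype LinearMap.id) := fun _ =>
    koszul_tmul_mem_range_stilde e (g := fun x η => ExteriorAlgebra.ι A (ω x) * η) hδ
  exact map_comp_eq_comp_map_of_descends (stilde e)
    (LinearMap.comp_ofBijective_symm_comp_subtype _ _ _ hS) hS.2 hδ_stilde hδS hδW

/-- `(π ⊗ id) ∘ δ_S = δ_W ∘ (π ⊗ id)` as maps
`S(E) ⊗ ∧E* → W(E) ⊗ ∧E*`, where `π = μ_W ∘ (μ_S|S̃(E))⁻¹`. -/
theorem stmt8 (A : Type*) [CommRing A] (E : Type*) [AddCommGroup E] [Module A E]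
    (lam : A) (ω : E →ₗ[A] E →ₗ[A] A) (halt : ∀ x : E, ω x x = 0)
    (ν ν' : ℕ) (e : Module.Basis (Fin (ν + ν')) A E)
    (δ : TensorAlgebra A E ⊗[A] ExteriorAlgebra A (Module.Dual A E) →ₗ[A]
      TensorAlgebra A E ⊗[A] ExteriorAlgebra A (Module.Dual A E))
    (hδ : ∀ (xs : List E) (η : ExteriorAlgebra A (Module.Dual A E)),
      δ ((xs.map fun x => TensorAlgebra.ι A x).prod ⊗ₜ[A] η) =
        ∑ i : Fin xs.length,
          ((xs.eraseIdx (i : ℕ)).map fun x => TensorAlgebra.ι A x).prod ⊗ₜ[A]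
            (ExteriorAlgebra.ι A (ω (xs.get i)) * η))
    (δS : RingQuot (symRel A E) ⊗[A] ExteriorAlgebra A (Module.Dual A E) →ₗ[A]
      RingQuot (symRel A E) ⊗[A] ExteriorAlgebra A (Module.Dual A E))
    (hδS : δS.comp (TensorProduct.map (RingQuot.mkAlgHom A (symRel A E)).toLinearMap
        LinearMap.id) =
      (TensorProduct.map (RingQuot.mkAlgHom A (symRel A E)).toLinearMap
        LinearMap.id).comp δ)
    (δW : RingQuot (weylRel A lam ω) ⊗[A] ExteriorAlgebra A (Module.Dual A E) →ₗ[A]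
      RingQuot (weylRel A lam ω) ⊗[A] ExteriorAlgebra A (Module.Dual A E))
    (hδW : δW.comp (TensorProduct.map (RingQuot.mkAlgHom A (weylRel A lam ω)).toLinearMap
        LinearMap.id) =
      (TensorProduct.map (RingQuot.mkAlgHom A (weylRel A lam ω)).toLinearMap
        LinearMap.id).comp δ)
    (hS : Function.Bijective
      ((RingQuot.mkAlgHom A (symRel A E)).toLinearMap.comp (stilde e).subtype)) :
    (TensorProduct.map
        (((RingQuot.mkAlgHom A (weylRel A lam ω)).toLinearMap.comp
            (stilde e).subtype).comp
          (LinearEquiv.ofBijective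
            ((RingQuot.mkAlgHom A (symRel A E)).toLinearMap.comp (stilde e).subtype)
            hS).symm.toLinearMap)
        (LinearMap.id : ExteriorAlgebra A (Module.Dual A E) →ₗ[A]
          ExteriorAlgebra A (Module.Dual A E))).comp δS =
      δW.comp
        (TensorProduct.map
          (((RingQuot.mkAlgHom A (weylRel A lam ω)).toLinearMap.comp
              (stilde e).subtype).comp
            (LinearEquiv.ofBijective
              ((RingQuot.mkAlgHom A (symRel A E)).toLinearMap.comp (stilde e).subtype)
              hS).symm.toLinearMap)
          LinearMap.id) :=
  stmt8_general A E lam ω ν ν' e δ hδ δS hδS δW hδW hS
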